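/- Let C ⊆ ℝ^p be closed convex, x⋆ ∈ ℝ^p, and suppose there exists x̃ ∈ C such that C − x̃ = Q₁ ⊕ Q₂ where Q₁, Q₂ lie in orthogonal subspaces of ℝ^p and Q₂ ⊆ α B₂^p for some α ≥ 0. Let ȳ = x⋆ + (σ/√n) z with z ∼ N(0, I_p), and let x̂ be the Euclidean projection of ȳ onto C. Then E[‖x⋆ − x̂‖₂²] ≤ 6 [ (σ²/n) G(cone(Q₁) ∩ B₂^p) + ‖x⋆ − x̃‖₂² + α² ]. -/

import Mathlib

open MeasureTheory

noncomputable def stdGaussian (p : ℕ) : Measure (EuclideanSpace ℝ (Fin p)) :=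
  (Measure.pi fun _ : Fin p => ProbabilityTheory.gaussianReal 0 1).map
    (MeasurableEquiv.toLp 2 (Fin p → ℝ))

noncomputable def gaussSqComplexity {p : ℕ} (D : Set (EuclideanSpace ℝ (Fin p))) : ℝ :=
  ∫ g, (⨆ a : D, (inner ℝ (a : EuclideanSpace ℝ (Fin p)) g : ℝ) ^ 2) ∂(stdGaussian p)

/-- Conic hull (for the sets arising here): nonnegative multiples of elements. -/
def coneHull {p : ℕ} (D : Set (EuclideanSpace ℝ (Fin p))) : Set (EuclideanSpace ℝ (Fin p)) :=
  {x | ∃ r : ℝ, 0 ≤ r ∧ ∃ d ∈ D, x = r • d}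

section Aux
open Real

lemma integrable_sq_gaussianReal' :
    Integrable (fun x : ℝ => x ^ 2) (ProbabilityTheory.gaussianReal 0 1) := by
  rw [ProbabilityTheory.gaussianReal_of_var_ne_zero 0 one_ne_zero,
    integrable_withDensity_iff (ProbabilityTheory.measurable_gaussianPDF 0 1)
      (ae_of_all _ fun x => ENNReal.ofReal_lt_top)]
  have h := (integrable_rpow_mul_exp_neg_mul_sq (by norm_num : (0:ℝ) < 1/2)
      (by norm_num : (-1:ℝ) < 2)).const_mul ((Real.sqrt (2 * π))⁻¹)
  refine h.congr (ae_of_all _ fun x => ?_)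
  have h2 : (x:ℝ) ^ (2:ℝ) = x ^ (2:ℕ) := by
    rw [show (2:ℝ) = ((2:ℕ):ℝ) by norm_num, Real.rpow_natCast]
  simp only [ProbabilityTheory.gaussianPDF_def]
  rw [ENNReal.toReal_ofReal (ProbabilityTheory.gaussianPDFReal_nonneg 0 1 x)]
  simp only [ProbabilityTheory.gaussianPDFReal, h2]
  push_cast
  ring_nf

instance stdGaussian_prob (p : ℕ) : IsProbabilityMeasure (stdGaussian p) :=
  Measure.isProbabilityMeasure_map (MeasurableEquiv.measurable _).aemeasurable

lemma measurePreserving_eval' {ι : Type*} [Fintype ι] {X : ι → Type*}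
    [∀ i, MeasurableSpace (X i)] (μ : ∀ i, Measure (X i)) [∀ i, IsProbabilityMeasure (μ i)]
    (i : ι) : MeasurePreserving (Function.eval i) (Measure.pi μ) (μ i) := by
  classical
  refine ⟨measurable_pi_apply i, ?_⟩
  ext s hs
  rw [Measure.map_apply (measurable_pi_apply i) hs, Set.eval_preimage, Measure.pi_pi]
  rw [Finset.prod_eq_single i (fun j _ hj => by simp [Function.update_of_ne hj]) (by simp)]
  simp

lemma integrable_normsq_stdGaussian (p : ℕ) :
    Integrable (fun z : EuclideanSpace ℝ (Fin p) => ‖z‖ ^ 2) (stdGaussian p) := by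
  rw [stdGaussian, integrable_map_equiv]
  have : ((fun z : EuclideanSpace ℝ (Fin p) => ‖z‖ ^ 2) ∘
      (MeasurableEquiv.toLp 2 (Fin p → ℝ))) = fun x : Fin p → ℝ => ∑ i, x i ^ 2 := by
    funext x
    simp only [Function.comp_apply, EuclideanSpace.norm_eq]
    rw [Real.sq_sqrt (by positivity)]
    congr 1
    ext i
    simp [MeasurableEquiv.coe_toLp, sq_abs]
  rw [this]
  refine integrable_finset_sum _ fun i _ => ?_
  have := ((measurePreserving_eval' (fun _ : Fin p => ProbabilityTheory.gaussianReal 0 1)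
      i).integrable_comp (integrable_sq_gaussianReal'.aestronglyMeasurable)).2
      integrable_sq_gaussianReal'
  exact this

variable {p : ℕ}

lemma bddAbove_inner_sq (D : Set (EuclideanSpace ℝ (Fin p)))
    (hb : ∀ a ∈ D, ‖a‖ ≤ 1) (z : EuclideanSpace ℝ (Fin p))
    (T : Set (EuclideanSpace ℝ (Fin p))) (hT : T ⊆ D) :
    BddAbove (Set.range fun a : T => (inner ℝ (a : EuclideanSpace ℝ (Fin p)) z : ℝ) ^ 2) := by
  refine ⟨‖z‖ ^ 2, ?_⟩
  rintro _ ⟨a, rfl⟩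
  have h1 : |(inner ℝ (a : EuclideanSpace ℝ (Fin p)) z : ℝ)| ≤
      ‖(a : EuclideanSpace ℝ (Fin p))‖ * ‖z‖ := abs_real_inner_le_norm _ _
  have h2 : ‖(a : EuclideanSpace ℝ (Fin p))‖ ≤ 1 := hb _ (hT a.2)
  have h3 : (0:ℝ) ≤ ‖z‖ := norm_nonneg _
  calc (inner ℝ (a : EuclideanSpace ℝ (Fin p)) z : ℝ) ^ 2
      = |(inner ℝ (a : EuclideanSpace ℝ (Fin p)) z : ℝ)| ^ 2 := (sq_abs _).symm
    _ ≤ (‖(a : EuclideanSpace ℝ (Fin p))‖ * ‖z‖) ^ 2 :=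
        pow_le_pow_left₀ (abs_nonneg _) h1 2
    _ ≤ ‖z‖ ^ 2 := pow_le_pow_left₀ (by positivity) (mul_le_of_le_one_left h3 h2) 2

lemma measurable_sq_sup (D : Set (EuclideanSpace ℝ (Fin p)))
    (hb : ∀ a ∈ D, ‖a‖ ≤ 1) :
    Measurable (fun z : EuclideanSpace ℝ (Fin p) =>
      ⨆ a : D, (inner ℝ (a : EuclideanSpace ℝ (Fin p)) z : ℝ) ^ 2) := by
  rcases D.eq_empty_or_nonempty with hD | hD
  · subst hD
    have : (fun z : EuclideanSpace ℝ (Fin p) =>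
        ⨆ a : (∅ : Set (EuclideanSpace ℝ (Fin p))),
          (inner ℝ (a : EuclideanSpace ℝ (Fin p)) z : ℝ) ^ 2) = fun _ => 0 := by
      funext z
      exact Real.iSup_of_isEmpty _
    rw [this]; exact measurable_const
  · have hne : Nonempty D := hD.to_subtype
    obtain ⟨s, hsc, hsd⟩ := TopologicalSpace.exists_countable_dense (↥D)
    set T : Set (EuclideanSpace ℝ (Fin p)) := Subtype.val '' s with hTdef
    have hTsub : T ⊆ D := by rintro _ ⟨b, _, rfl⟩; exact b.2
    have hTc : T.Countable := hsc.image _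
    have hTne : T.Nonempty := (hsd.nonempty.mono (fun x hx => hx)).image _
    have : Nonempty T := hTne.to_subtype
    have hcnt : Countable T := hTc.to_subtype
    have heq : (fun z : EuclideanSpace ℝ (Fin p) =>
        ⨆ a : D, (inner ℝ (a : EuclideanSpace ℝ (Fin p)) z : ℝ) ^ 2)
        = fun z => ⨆ b : T, (inner ℝ (b : EuclideanSpace ℝ (Fin p)) z : ℝ) ^ 2 := by
      funext z
      apply le_antisymm
      · refine ciSup_le fun a => ?_
        obtain ⟨u, hu, hulim⟩ := mem_closure_iff_seq_limit.1 (hsd a)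
        have hcont : Continuous fun b : EuclideanSpace ℝ (Fin p) =>
            (inner ℝ b z : ℝ) ^ 2 := (Continuous.inner continuous_id continuous_const).pow 2
        have hvlim : Filter.Tendsto (fun n => ((u n : D) : EuclideanSpace ℝ (Fin p)))
            Filter.atTop (nhds (a : EuclideanSpace ℝ (Fin p))) :=
          (continuous_subtype_val.tendsto a).comp hulim
        have hlim := (hcont.tendsto _).comp hvlim
        refine le_of_tendsto hlim (Filter.Eventually.of_forall fun n => ?_)
        exact le_ciSup (bddAbove_inner_sq D hb z T hTsub)
          (⟨((u n : D) : EuclideanSpace ℝ (Fin p)), ⟨u n, hu n, rfl⟩⟩ : T)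
      · refine ciSup_le fun b => ?_
        exact le_ciSup (bddAbove_inner_sq D hb z D (fun _ h => h))
          (⟨(b : EuclideanSpace ℝ (Fin p)), hTsub b.2⟩ : D)
    rw [heq]
    refine Measurable.iSup fun b => ?_
    exact ((Continuous.inner continuous_const continuous_id).pow 2).measurable

end Aux

lemma aux_cancel {x c : ℝ} (hx : 0 ≤ x) (hc : 0 ≤ c) (h : x ^ 2 ≤ c * x) : x ≤ c := by
  rcases hx.eq_or_lt with h0 | h0
  · linarith
  · have hxx : x * x ≤ c * x := by nlinarith
    exact le_of_mul_le_mul_right hxx h0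

lemma aux_combine {X A B ts a : ℝ} (hA : 0 ≤ A) (hB : 0 ≤ B) (hts : 0 ≤ ts) (ha : 0 ≤ a)
    (hX : X ≤ (A + B) ^ 2) (hB2 : B ^ 2 ≤ (A + ts) ^ 2 + a ^ 2) :
    X ≤ 6 * A ^ 2 + 4 * ts ^ 2 + 2 * a ^ 2 := by
  nlinarith [sq_nonneg (A - B), sq_nonneg (A - ts)]

set_option maxHeartbeats 1000000 in
theorem stmt18 {p : ℕ} (n : ℕ) (hn : 0 < n) (σ : ℝ) (hσ : 0 < σ)
    (C : Set (EuclideanSpace ℝ (Fin p))) (hCc : IsClosed C) (hCconv : Convex ℝ C)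
    (xstar xtilde : EuclideanSpace ℝ (Fin p)) (hxt : xtilde ∈ C)
    (Q₁ Q₂ : Set (EuclideanSpace ℝ (Fin p)))
    (R₁ R₂ : Submodule ℝ (EuclideanSpace ℝ (Fin p)))
    (hQ₁ : Q₁ ⊆ (R₁ : Set (EuclideanSpace ℝ (Fin p))))
    (hQ₂ : Q₂ ⊆ (R₂ : Set (EuclideanSpace ℝ (Fin p))))
    (horth : ∀ u ∈ R₁, ∀ w ∈ R₂, (inner ℝ u w : ℝ) = 0)
    (hdecomp : {d | ∃ c ∈ C, d = c - xtilde} = Set.image2 (· + ·) Q₁ Q₂)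
    (α : ℝ) (hα : 0 ≤ α) (hQ₂bdd : ∀ q ∈ Q₂, ‖q‖ ≤ α)
    (xhat : EuclideanSpace ℝ (Fin p) → EuclideanSpace ℝ (Fin p))
    (hproj : ∀ z, xhat z ∈ C ∧
      ∀ w ∈ C, ‖(xstar + (σ / Real.sqrt n) • z) - xhat z‖ ≤ ‖(xstar + (σ / Real.sqrt n) • z) - w‖) :
    ∫ z, ‖xstar - xhat z‖ ^ 2 ∂(stdGaussian p) ≤
      6 * ((σ ^ 2 / n) * gaussSqComplexity {d ∈ coneHull Q₁ | ‖d‖ ≤ 1} +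
        ‖xstar - xtilde‖ ^ 2 + α ^ 2) := by
  classical
  set t : ℝ := σ / Real.sqrt n with htdef
  have hsn : (0:ℝ) < Real.sqrt n := Real.sqrt_pos.2 (by exact_mod_cast hn)
  have ht : 0 < t := div_pos hσ hsn
  have ht2 : t ^ 2 = σ ^ 2 / n := by
    rw [htdef, div_pow, Real.sq_sqrt (by positivity : (0:ℝ) ≤ (n:ℝ))]
  set v : EuclideanSpace ℝ (Fin p) := xstar - xtilde with hvdef
  set D : Set (EuclideanSpace ℝ (Fin p)) := {d ∈ coneHull Q₁ | ‖d‖ ≤ 1} with hDdef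
  have hbD : ∀ a ∈ D, ‖a‖ ≤ 1 := fun a ha => ha.2
  set Sq : EuclideanSpace ℝ (Fin p) → ℝ := fun z => ⨆ a : D, (inner ℝ (a : EuclideanSpace ℝ (Fin p)) z : ℝ) ^ 2 with hSqdef
  have hSq_nonneg : ∀ z, 0 ≤ Sq z := fun z => Real.iSup_nonneg fun a => sq_nonneg _
  -- 0 ∈ Q₁ and 0 ∈ Q₂
  have h0 : (0 : EuclideanSpace ℝ (Fin p)) ∈ Set.image2 (· + ·) Q₁ Q₂ := by
    rw [← hdecomp]; exact ⟨xtilde, hxt, by simp⟩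
  obtain ⟨a0, ha0, b0, hb0, hab0⟩ := h0
  have hab0' : a0 + b0 = 0 := hab0
  have hinner0 : (inner ℝ a0 b0 : ℝ) = 0 := horth a0 (hQ₁ ha0) b0 (hQ₂ hb0)
  have ha0z : a0 = 0 := by
    have h1 : (inner ℝ a0 (a0 + b0) : ℝ) = 0 := by rw [hab0', inner_zero_right]
    rw [inner_add_right, hinner0, real_inner_self_eq_norm_sq] at h1
    have h2 : ‖a0‖ ^ 2 = 0 := by linarith
    have := pow_eq_zero_iff (n := 2) (by norm_num) |>.1 h2
    exact norm_eq_zero.1 this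
  have h0Q₁ : (0 : EuclideanSpace ℝ (Fin p)) ∈ Q₁ := ha0z ▸ ha0
  have h0Q₂ : (0 : EuclideanSpace ℝ (Fin p)) ∈ Q₂ := by
    have : b0 = 0 := by
      have := hab0'; rw [ha0z] at this; simpa using this
    exact this ▸ hb0
  have h0D : (0 : EuclideanSpace ℝ (Fin p)) ∈ D := ⟨⟨1, zero_le_one, 0, h0Q₁, by simp⟩, by simp⟩
  have hDne : Nonempty D := ⟨⟨0, h0D⟩⟩
  -- pointwise bound
  have hpt : ∀ z, ‖xstar - xhat z‖ ^ 2 ≤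
      6 * ‖v‖ ^ 2 + 4 * t ^ 2 * Sq z + 2 * α ^ 2 := by
    intro z
    obtain ⟨hxC, hmin⟩ := hproj z
    have hCne : Nonempty C := ⟨⟨xtilde, hxt⟩⟩
    set y : EuclideanSpace ℝ (Fin p) := xstar + t • z with hydef
    have hinf : ‖y - xhat z‖ = ⨅ w : C, ‖y - w‖ := by
      apply le_antisymm
      · exact le_ciInf fun w => hmin w w.2
      · exact ciInf_le ⟨0, by rintro _ ⟨w, rfl⟩; exact norm_nonneg _⟩ (⟨xhat z, hxC⟩ : C)
    have hVI := (norm_eq_iInf_iff_real_inner_le_zero hCconv hxC).1 hinf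
    have hmem : xhat z - xtilde ∈ Set.image2 (· + ·) Q₁ Q₂ := by
      rw [← hdecomp]; exact ⟨xhat z, hxC, rfl⟩
    obtain ⟨q₁, hq₁, q₂, hq₂, hsum⟩ := hmem
    have hsum' : q₁ + q₂ = xhat z - xtilde := hsum
    have hx : xhat z = xtilde + q₁ + q₂ := by
      linear_combination (norm := module) -hsum'
    have hwC : xtilde + q₂ ∈ C := by
      have : q₂ ∈ Set.image2 (· + ·) Q₁ Q₂ := ⟨0, h0Q₁, q₂, hq₂, zero_add q₂⟩
      rw [← hdecomp] at this
      obtain ⟨c, hc, hcq⟩ := this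
      have : xtilde + q₂ = c := by rw [hcq]; abel
      exact this ▸ hc
    have hVIq := hVI _ hwC
    have hq21 : (inner ℝ q₂ q₁ : ℝ) = 0 := by
      rw [real_inner_comm]; exact horth q₁ (hQ₁ hq₁) q₂ (hQ₂ hq₂)
    have hq12 : (inner ℝ q₁ q₂ : ℝ) = 0 := horth q₁ (hQ₁ hq₁) q₂ (hQ₂ hq₂)
    -- key1 : ‖q₁‖^2 ≤ ⟪v,q₁⟫ + t*⟪z,q₁⟫
    have hdiff : (xtilde + q₂) - xhat z = -q₁ := by
      rw [hx]; abel
    have hyx : y - xhat z = v + t • z - q₁ - q₂ := by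
      rw [hydef, hx, hvdef]; abel
    have key0 : (0:ℝ) ≤ inner ℝ (y - xhat z) q₁ := by
      rw [hdiff, inner_neg_right] at hVIq
      linarith
    have key1 : ‖q₁‖ ^ 2 ≤ (inner ℝ v q₁ : ℝ) + t * (inner ℝ z q₁ : ℝ) := by
      rw [hyx] at key0
      rw [inner_sub_left, inner_sub_left, inner_add_left, real_inner_smul_left,
        real_inner_self_eq_norm_sq, hq21] at key0
      linarith
    set S : ℝ := Real.sqrt (Sq z) with hSdef
    have hS0 : 0 ≤ S := Real.sqrt_nonneg _
    have hSsq : S ^ 2 = Sq z := Real.sq_sqrt (hSq_nonneg z)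
    have hzq₁ : (inner ℝ z q₁ : ℝ) ≤ ‖q₁‖ * S := by
      by_cases hq0 : q₁ = 0
      · simp [hq0]
      · set a : EuclideanSpace ℝ (Fin p) := ‖q₁‖⁻¹ • q₁ with hadef
        have hnq : (0:ℝ) < ‖q₁‖ := norm_pos_iff.2 hq0
        have haD : a ∈ D := by
          refine ⟨⟨‖q₁‖⁻¹, by positivity, q₁, hq₁, rfl⟩, ?_⟩
          rw [hadef, norm_smul, norm_inv, norm_norm, inv_mul_cancel₀ (ne_of_gt hnq)]
        have hfa : (inner ℝ (a : EuclideanSpace ℝ (Fin p)) z : ℝ) ^ 2 ≤ Sq z :=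
          le_ciSup (bddAbove_inner_sq D hbD z D (fun _ h => h)) (⟨a, haD⟩ : D)
        have haz : (inner ℝ a z : ℝ) ≤ S := by
          calc (inner ℝ a z : ℝ) ≤ |(inner ℝ a z : ℝ)| := le_abs_self _
            _ = Real.sqrt ((inner ℝ a z : ℝ) ^ 2) := (Real.sqrt_sq_eq_abs _).symm
            _ ≤ S := Real.sqrt_le_sqrt hfa
        have hq₁a : q₁ = ‖q₁‖ • a := by
          rw [hadef, smul_smul, mul_inv_cancel₀ (ne_of_gt hnq), one_smul]
        calc (inner ℝ z q₁ : ℝ) = (inner ℝ q₁ z : ℝ) := real_inner_comm _ _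
          _ = ‖q₁‖ * (inner ℝ a z : ℝ) := by
              conv_lhs => rw [hq₁a]
              rw [real_inner_smul_left]
          _ ≤ ‖q₁‖ * S := mul_le_mul_of_nonneg_left haz (le_of_lt hnq)
    have key2 : ‖q₁‖ ≤ ‖v‖ + t * S := by
      have hvq : (inner ℝ v q₁ : ℝ) ≤ ‖v‖ * ‖q₁‖ := real_inner_le_norm _ _
      have htz := mul_le_mul_of_nonneg_left hzq₁ (le_of_lt ht)
      refine aux_cancel (norm_nonneg _) (by positivity) ?_
      nlinarith [key1]
    have hq₂α : ‖q₂‖ ≤ α := hQ₂bdd q₂ hq₂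
    have hq12n : ‖q₁ + q₂‖ ^ 2 = ‖q₁‖ ^ 2 + ‖q₂‖ ^ 2 := by
      rw [norm_add_sq_real, hq12]; ring
    have hfinal1 : ‖xstar - xhat z‖ ≤ ‖v‖ + ‖q₁ + q₂‖ := by
      have : xstar - xhat z = v - (q₁ + q₂) := by rw [hx, hvdef]; abel
      rw [this]
      exact norm_sub_le _ _
    have hfinal2 : ‖xstar - xhat z‖ ^ 2 ≤ (‖v‖ + ‖q₁ + q₂‖) ^ 2 :=
      pow_le_pow_left₀ (norm_nonneg _) hfinal1 2
    have hB2 : ‖q₁ + q₂‖ ^ 2 ≤ (‖v‖ + t * S) ^ 2 + α ^ 2 := by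
      rw [hq12n]
      have h1 : ‖q₁‖ ^ 2 ≤ (‖v‖ + t * S) ^ 2 :=
        pow_le_pow_left₀ (norm_nonneg _) key2 2
      have h2 : ‖q₂‖ ^ 2 ≤ α ^ 2 := pow_le_pow_left₀ (norm_nonneg _) hq₂α 2
      linarith
    have hcomb := aux_combine (norm_nonneg v) (norm_nonneg (q₁ + q₂))
      (mul_nonneg (le_of_lt ht) hS0) hα hfinal2 hB2
    have hts2 : (t * S) ^ 2 = t ^ 2 * Sq z := by rw [mul_pow, hSsq]
    linarith
  -- integration
  have hSqMeas : Measurable Sq := measurable_sq_sup D hbD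
  have hSqle : ∀ z, Sq z ≤ ‖z‖ ^ 2 := by
    intro z
    refine ciSup_le fun a => ?_
    have h1 : |(inner ℝ (a : EuclideanSpace ℝ (Fin p)) z : ℝ)| ≤
        ‖(a : EuclideanSpace ℝ (Fin p))‖ * ‖z‖ := abs_real_inner_le_norm _ _
    have h2 : ‖(a : EuclideanSpace ℝ (Fin p))‖ ≤ 1 := hbD _ a.2
    calc (inner ℝ (a : EuclideanSpace ℝ (Fin p)) z : ℝ) ^ 2
        = |(inner ℝ (a : EuclideanSpace ℝ (Fin p)) z : ℝ)| ^ 2 := (sq_abs _).symm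
      _ ≤ (‖(a : EuclideanSpace ℝ (Fin p))‖ * ‖z‖) ^ 2 :=
          pow_le_pow_left₀ (abs_nonneg _) h1 2
      _ ≤ ‖z‖ ^ 2 :=
          pow_le_pow_left₀ (by positivity) (mul_le_of_le_one_left (norm_nonneg _) h2) 2
  have hSqInt : Integrable Sq (stdGaussian p) := by
    refine Integrable.mono (integrable_normsq_stdGaussian p) hSqMeas.aestronglyMeasurable
      (ae_of_all _ fun z => ?_)
    rw [Real.norm_eq_abs, abs_of_nonneg (hSq_nonneg z), Real.norm_eq_abs,
      abs_of_nonneg (by positivity : (0:ℝ) ≤ ‖z‖ ^ 2)]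
    exact hSqle z
  set G : ℝ := ∫ z, Sq z ∂(stdGaussian p) with hGdef
  have hGC : gaussSqComplexity D = G := rfl
  have hG0 : 0 ≤ G := integral_nonneg fun z => hSq_nonneg z
  have hint : ∫ z, ‖xstar - xhat z‖ ^ 2 ∂(stdGaussian p) ≤
      ∫ z, (6 * ‖v‖ ^ 2 + 4 * t ^ 2 * Sq z + 2 * α ^ 2) ∂(stdGaussian p) := by
    refine integral_mono_of_nonneg (ae_of_all _ fun z => by positivity)
      (((integrable_const _).add (hSqInt.const_mul _)).add (integrable_const _))
      (ae_of_all _ hpt)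
  have heval : ∫ z, (6 * ‖v‖ ^ 2 + 4 * t ^ 2 * Sq z + 2 * α ^ 2) ∂(stdGaussian p)
      = 6 * ‖v‖ ^ 2 + 4 * t ^ 2 * G + 2 * α ^ 2 := by
    have hre : (fun z => 6 * ‖v‖ ^ 2 + 4 * t ^ 2 * Sq z + 2 * α ^ 2)
        = fun z => (6 * ‖v‖ ^ 2 + 2 * α ^ 2) + (4 * t ^ 2) * Sq z := funext fun z => by ring
    rw [hre, integral_add (integrable_const _) (hSqInt.const_mul _), MeasureTheory.integral_const_mul,
      integral_const]
    simp [measure_univ]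
    ring
  rw [hGC, ← ht2]
  have hmul : 0 ≤ t ^ 2 * G := mul_nonneg (sq_nonneg t) hG0
  calc ∫ z, ‖xstar - xhat z‖ ^ 2 ∂(stdGaussian p)
      ≤ 6 * ‖v‖ ^ 2 + 4 * t ^ 2 * G + 2 * α ^ 2 := heval ▸ hint
    _ ≤ 6 * (t ^ 2 * G + ‖v‖ ^ 2 + α ^ 2) := by nlinarith [sq_nonneg α]
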